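/- arXiv:1708.09078 — 7 statements merged into one kernel-verified Lean document; each statement's English description precedes it below -/
import Mathlib

section
/- Let V be a complex inner product space and let e, f, h : V → V be complex-linear maps such that ⟨e u, w⟩ = ⟨u, f w⟩ for all u, w ∈ V, h = e ∘ f − f ∘ e, and h ∘ f − f ∘ h = −2 f. If v ∈ V is a unit vector with e v = 0 and h v = a • v for some real number a, then ‖f (f v)‖² = 2a(a−1); in particular ‖f (f v)‖² ≤ 2 ‖f v‖⁴, i.e. ‖f(f v)‖ ≤ √2 · ‖f v‖². -/
/-!
With `f` adjoint to `e`, `‖f w‖² = ⟪e (f w), w⟫`, so the norms of the vectors `fⁿ v` are read off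
from the `sl₂` raising relation `e fⁿ⁺¹ v = (n+1)(a-n) fⁿ v` at a highest weight vector `v` of
weight `a`: `‖f v‖² = a` and `‖f² v‖² = 2(a-1)‖f v‖² = 2a(a-1) ≤ 2a² = 2‖f v‖⁴`.
-/

open scoped InnerProductSpace

namespace Module.End

variable {R M : Type*} [CommRing R] [AddCommGroup M] [Module R M]
  {e f h : Module.End R M} {v : M} {μ : R}

theorem apply_pow_apply_of_lie_eq_neg_two_smul (hhf : ⁅h, f⁆ = (-2 : R) • f)
    (hv : h v = μ • v) (n : ℕ) : h ((f ^ n) v) = (μ - 2 * n) • (f ^ n) v := by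
  have hcomm (w : M) : h (f w) = f (h w) + (-2 : R) • f w := by
    simpa [LieRing.of_associative_ring_bracket, sub_eq_iff_eq_add'] using
      LinearMap.congr_fun hhf w
  induction n with
  | zero => simpa using hv
  | succ n ih =>
    rw [pow_succ' f, mul_apply, hcomm, ih, map_smul, ← add_smul]
    push_cast
    ring_nf

theorem apply_pow_succ_apply_of_primitive (hef : ⁅e, f⁆ = h)
    (hhf : ⁅h, f⁆ = (-2 : R) • f) (hev : e v = 0) (hv : h v = μ • v) (n : ℕ) :
    e ((f ^ (n + 1)) v) = ((n + 1) * (μ - n)) • (f ^ n) v := by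
  have hcomm (w : M) : e (f w) = f (e w) + h w := by
    simpa [LieRing.of_associative_ring_bracket, sub_eq_iff_eq_add'] using
      LinearMap.congr_fun hef w
  induction n with
  | zero => simp [hcomm, hev, hv]
  | succ n ih =>
    rw [pow_succ' f (n + 1), mul_apply, hcomm, ih, map_smul,
      apply_pow_apply_of_lie_eq_neg_two_smul hhf hv, ← mul_apply, ← pow_succ', ← add_smul]
    push_cast
    ring_nf

end Module.End

section Adjoint

variable {𝕜 V : Type*} [RCLike 𝕜] [NormedAddCommGroup V] [InnerProductSpace 𝕜 V]
  {e f : V →ₗ[𝕜] V}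

theorem norm_sq_apply_of_apply_apply_eq_smul (hadj : ∀ u w : V, ⟪e u, w⟫_𝕜 = ⟪u, f w⟫_𝕜)
    {w : V} {r : ℝ} (hw : e (f w) = (r : 𝕜) • w) : ‖f w‖ ^ 2 = r * ‖w‖ ^ 2 := by
  have := hadj (f w) w
  rw [hw, inner_smul_left, RCLike.conj_ofReal, inner_self_eq_norm_sq_to_K,
    inner_self_eq_norm_sq_to_K] at this
  exact_mod_cast this.symm

theorem norm_sq_pow_succ_apply_of_primitive (hadj : ∀ u w : V, ⟪e u, w⟫_𝕜 = ⟪u, f w⟫_𝕜)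
    {h : V →ₗ[𝕜] V} (hef : ⁅e, f⁆ = h) (hhf : ⁅h, f⁆ = (-2 : 𝕜) • f) {v : V} (hev : e v = 0)
    {a : ℝ} (hv : h v = (a : 𝕜) • v) (n : ℕ) :
    ‖(f ^ (n + 1)) v‖ ^ 2 = (n + 1) * (a - n) * ‖(f ^ n) v‖ ^ 2 := by
  have hraise := Module.End.apply_pow_succ_apply_of_primitive hef hhf hev hv n
  rw [pow_succ' f n, Module.End.mul_apply] at hraise ⊢
  apply norm_sq_apply_of_apply_apply_eq_smul hadj
  rw [hraise]
  push_cast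
  rfl

end Adjoint

/-- The case `α = β` of Lemma 2.3: an sl₂-type computation. If `f` is the adjoint of `e`,
`h = e∘f - f∘e`, `h∘f - f∘h = -2f`, and `v` is a unit vector with `e v = 0` and
`h v = a • v`, then `‖f (f v)‖² = 2a(a-1)`; in particular `‖f (f v)‖ ≤ √2 ‖f v‖²`. -/
theorem stmt1 {V : Type*} [NormedAddCommGroup V] [InnerProductSpace ℂ V]
    (e f h : V →ₗ[ℂ] V)
    (hadj : ∀ u w : V, ⟪e u, w⟫_ℂ = ⟪u, f w⟫_ℂ)
    (hh : h = e ∘ₗ f - f ∘ₗ e)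
    (hhf : h ∘ₗ f - f ∘ₗ h = (-2 : ℂ) • f)
    (v : V) (hv : ‖v‖ = 1) (hev : e v = 0)
    (a : ℝ) (hav : h v = (a : ℂ) • v) :
    ‖f (f v)‖ ^ 2 = 2 * a * (a - 1) ∧ ‖f (f v)‖ ≤ Real.sqrt 2 * ‖f v‖ ^ 2 := by
  have hef : ⁅e, f⁆ = h := by rw [hh, LieRing.of_associative_ring_bracket]; rfl
  have hhf' : ⁅h, f⁆ = (-2 : ℂ) • f := by rw [LieRing.of_associative_ring_bracket, ← hhf]; rfl
  have hfv : ‖f v‖ ^ 2 = a := by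
    simpa [hv] using norm_sq_pow_succ_apply_of_primitive hadj hef hhf' hev hav 0
  have hffv : ‖f (f v)‖ ^ 2 = 2 * a * (a - 1) := by
    have := norm_sq_pow_succ_apply_of_primitive hadj hef hhf' hev hav 1
    rw [pow_two f, Module.End.mul_apply, pow_one, hfv] at this
    rw [this]
    push_cast
    ring
  refine ⟨hffv, le_of_pow_le_pow_left₀ two_ne_zero (by positivity) ?_⟩
  rw [mul_pow, Real.sq_sqrt zero_le_two, hffv, ← pow_mul, pow_mul', hfv]
  nlinarith
end

section
/- Let V be a complex inner product space and let e, f, h, g : V → V be complex-linear maps such that ⟨e u, w⟩ = ⟨u, f w⟩ for all u, w ∈ V and h = e ∘ f − f ∘ e. Suppose v ∈ V is a unit vector with e v = 0, h v = a • v for a real number a, h (g v) = b • (g v) for a real number b, and (e ∘ g − g ∘ e) v = 0. Then ‖f (g v)‖² = b · ‖g v‖². Consequently, if b ≤ 2a then ‖f (g v)‖ ≤ √2 · ‖f v‖ · ‖g v‖, and if b ≤ a then ‖f (g v)‖ ≤ ‖f v‖ · ‖g v‖. -/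
open scoped InnerProductSpace

/-
Since `e` is adjoint to `f`, `‖f w‖² = Re ⟪e (f w), w⟫`. If `e` kills `w`, then `e (f w) = h w`,
so an `h`-eigenvector `w` with real eigenvalue `c` killed by `e` has `‖f w‖² = c ‖w‖²`.
Both `v` and `g v` are such vectors (`e (g v) = g (e v) = 0`), which gives `‖f v‖² = a` and
`‖f (g v)‖² = b ‖g v‖²`; the inequalities follow by comparing squares.
-/

section Adjoint

variable {𝕜 V : Type*} [RCLike 𝕜] [NormedAddCommGroup V] [InnerProductSpace 𝕜 V]

theorem norm_sq_eq_of_commutator_apply_eq_smul {e f : V →ₗ[𝕜] V}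
    (hadj : ∀ u w : V, ⟪e u, w⟫_𝕜 = ⟪u, f w⟫_𝕜) {w : V} (hw : e w = 0) {c : ℝ}
    (hc : (e ∘ₗ f - f ∘ₗ e) w = (c : 𝕜) • w) :
    ‖f w‖ ^ 2 = c * ‖w‖ ^ 2 := by
  have hefw : e (f w) = (c : 𝕜) • w := by simpa [hw] using hc
  calc ‖f w‖ ^ 2 = RCLike.re ⟪f w, f w⟫_𝕜 := (inner_self_eq_norm_sq _).symm
    _ = RCLike.re ⟪e (f w), w⟫_𝕜 := by rw [hadj]
    _ = c * ‖w‖ ^ 2 := by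
      rw [hefw, inner_smul_left, RCLike.conj_ofReal, RCLike.re_ofReal_mul,
        inner_self_eq_norm_sq]

end Adjoint

theorem le_sqrt_mul_mul_of_sq_eq_mul_sq {x y z a b k : ℝ} (hx : 0 ≤ x) (hy : 0 ≤ y) (hz : 0 ≤ z)
    (hxy : x ^ 2 = b * y ^ 2) (hza : z ^ 2 = a) (hk : 0 ≤ k) (hba : b ≤ k * a) :
    x ≤ Real.sqrt k * z * y := by
  refine (pow_le_pow_iff_left₀ hx (by positivity) two_ne_zero).mp ?_
  calc x ^ 2 = b * y ^ 2 := hxy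
    _ ≤ k * a * y ^ 2 := by gcongr
    _ = (Real.sqrt k * z * y) ^ 2 := by rw [mul_pow, mul_pow, Real.sq_sqrt hk, hza]

/-- Abstract core of Lemma 2.3 (Lemma mab). -/
theorem stmt2 {V : Type*} [NormedAddCommGroup V] [InnerProductSpace ℂ V]
    (e f h g : V →ₗ[ℂ] V)
    (hadj : ∀ u w : V, ⟪e u, w⟫_ℂ = ⟪u, f w⟫_ℂ)
    (hh : h = e ∘ₗ f - f ∘ₗ e)
    (v : V) (hv : ‖v‖ = 1) (hev : e v = 0)
    (a b : ℝ) (hav : h v = (a : ℂ) • v) (hbv : h (g v) = (b : ℂ) • (g v))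
    (heg : (e ∘ₗ g - g ∘ₗ e) v = 0) :
    ‖f (g v)‖ ^ 2 = b * ‖g v‖ ^ 2 ∧
    (b ≤ 2 * a → ‖f (g v)‖ ≤ Real.sqrt 2 * ‖f v‖ * ‖g v‖) ∧
    (b ≤ a → ‖f (g v)‖ ≤ ‖f v‖ * ‖g v‖) := by
  subst hh
  have hegv : e (g v) = 0 := by simpa [hev, sub_eq_zero] using heg
  have hfgv := norm_sq_eq_of_commutator_apply_eq_smul hadj hegv hbv
  have hfv : ‖f v‖ ^ 2 = a := by
    simpa [hv] using norm_sq_eq_of_commutator_apply_eq_smul hadj hev hav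
  have hbound {k : ℝ} (hk : 0 ≤ k) (hba : b ≤ k * a) :=
    le_sqrt_mul_mul_of_sq_eq_mul_sq (norm_nonneg _) (norm_nonneg _) (norm_nonneg _) hfgv hfv hk hba
  refine ⟨hfgv, fun hba => hbound zero_le_two hba, fun hba => ?_⟩
  simpa using hbound zero_le_one (by simpa using hba)
end

section
/- Let E be a real inner product space, Δ⁺ a finite set of vectors in E, and r : Δ⁺ → ℝ with r(α) ≥ 0 for all α. For α, β ∈ Δ⁺ set m(α,β) = √2 if α = β or ⟪α,β⟫ < 0, and m(α,β) = 1 otherwise. For γ ∈ E let P(γ) = {(α,β) ∈ Δ⁺ × Δ⁺ : α + β = γ} and S(γ) = ( ∑_{(α,β) ∈ P(γ)} m(α,β) r(α) r(β) )² − 2 ∑_{(α,β) ∈ P(γ)} r(α)² r(β)². If S(γ) > 0, then either P(γ) has more than two elements, or some (α,β) ∈ P(γ) satisfies ⟪α,β⟫ < 0. -/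
open Finset
open scoped InnerProductSpace
open scoped Classical

/-!
Write `P = P(γ)`. When no pair in `P` is obtuse, `m(α, β)² = 2` on the diagonal `α = β` and `1`
off it. By Cauchy–Schwarz, the first term of `S(γ)` is at most `(∑_P m²) · ∑_P r(α)² r(β)²`, so
`S(γ) > 0` forces `∑_P m² > 2`. But if `|P| ≤ 2` this sum is at most `2`: `P` is closed under
swapping and has at most one diagonal pair `(γ/2, γ/2)`, so a diagonal pair is all of `P`
(any other pair would come with its distinct swap), and otherwise the sum is `|P|`.
-/

section SumPairs

variable {E : Type*} [AddCommGroup E]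

noncomputable def sumPairs (Δ : Finset E) (γ : E) : Finset (E × E) :=
  (Δ ×ˢ Δ).filter (fun p : E × E => p.1 + p.2 = γ)

variable {Δ : Finset E} {γ : E} {p q : E × E}

lemma swap_mem_sumPairs (hp : p ∈ sumPairs Δ γ) : p.swap ∈ sumPairs Δ γ := by
  simp only [sumPairs, mem_filter, mem_product, Prod.fst_swap, Prod.snd_swap] at hp ⊢
  exact ⟨hp.1.symm, add_comm p.2 p.1 ▸ hp.2⟩

lemma eq_of_mem_sumPairs_of_fst_eq_snd [IsAddTorsionFree E] (hp : p ∈ sumPairs Δ γ)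
    (hq : q ∈ sumPairs Δ γ) (hpd : p.1 = p.2) (hqd : q.1 = q.2) : p = q := by
  simp only [sumPairs, mem_filter] at hp hq
  have h : 2 • p.1 = 2 • q.1 :=
    calc 2 • p.1 = p.1 + p.2 := by rw [two_nsmul, hpd]
      _ = q.1 + q.2 := hp.2.trans hq.2.symm
      _ = 2 • q.1 := by rw [two_nsmul, hqd]
  have h1 : p.1 = q.1 := IsAddTorsionFree.nsmul_right_injective two_ne_zero h
  exact Prod.ext h1 (by rw [← hpd, ← hqd, h1])

lemma sumPairs_eq_singleton_of_card_le_two [IsAddTorsionFree E] (hcard : #(sumPairs Δ γ) ≤ 2)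
    (hp : p ∈ sumPairs Δ γ) (hpd : p.1 = p.2) : sumPairs Δ γ = {p} := by
  refine eq_singleton_iff_unique_mem.2 ⟨hp, fun q hq => ?_⟩
  by_contra hqp
  have hqd : q.1 ≠ q.2 := fun hqd => hqp (eq_of_mem_sumPairs_of_fst_eq_snd hq hp hqd hpd)
  have hp_swap : p.swap = p := Prod.ext hpd.symm hpd
  have hpq : p ≠ q.swap := fun h => hqp (by rw [← Prod.swap_swap q, ← h, hp_swap])
  have hq_swap : q ≠ q.swap := fun h => hqd (congrArg Prod.fst h)
  have hsub : {p, q, q.swap} ⊆ sumPairs Δ γ := by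
    simp only [insert_subset_iff, singleton_subset_iff]
    exact ⟨hp, hq, swap_mem_sumPairs hq⟩
  have h3 : #({p, q, q.swap} : Finset (E × E)) = 3 :=
    card_eq_three.2 ⟨p, q, q.swap, Ne.symm hqp, hpq, hq_swap, rfl⟩
  have := card_le_card hsub
  omega

lemma sum_sumPairs_ite_le_two [IsAddTorsionFree E] (hcard : #(sumPairs Δ γ) ≤ 2) :
    ∑ p ∈ sumPairs Δ γ, (if p.1 = p.2 then 2 else 1 : ℝ) ≤ 2 := by
  by_cases hdiag : ∃ p ∈ sumPairs Δ γ, p.1 = p.2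
  · obtain ⟨p, hp, hpd⟩ := hdiag
    simp [sumPairs_eq_singleton_of_card_le_two hcard hp hpd, hpd]
  · push Not at hdiag
    rw [sum_congr rfl fun p hp => if_neg (hdiag p hp), sum_const, nsmul_one]
    exact_mod_cast hcard

end SumPairs

theorem stmt4_general {E : Type*} [NormedAddCommGroup E] [InnerProductSpace ℝ E]
    (Δ : Finset E) (r : E → ℝ)
    (m : E → E → ℝ)
    (hm : ∀ α β : E, m α β = if α = β ∨ ⟪α, β⟫_ℝ < 0 then Real.sqrt 2 else 1)
    (γ : E)
    (hS : 0 < (∑ p ∈ (Δ ×ˢ Δ).filter (fun p : E × E => p.1 + p.2 = γ),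
          m p.1 p.2 * r p.1 * r p.2) ^ 2
        - 2 * ∑ p ∈ (Δ ×ˢ Δ).filter (fun p : E × E => p.1 + p.2 = γ),
            r p.1 ^ 2 * r p.2 ^ 2) :
    2 < ((Δ ×ˢ Δ).filter (fun p : E × E => p.1 + p.2 = γ)).card ∨
      ∃ p ∈ (Δ ×ˢ Δ).filter (fun p : E × E => p.1 + p.2 = γ), ⟪p.1, p.2⟫_ℝ < 0 := by
  change 0 < (∑ p ∈ sumPairs Δ γ, m p.1 p.2 * r p.1 * r p.2) ^ 2
    - 2 * ∑ p ∈ sumPairs Δ γ, r p.1 ^ 2 * r p.2 ^ 2 at hS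
  change 2 < #(sumPairs Δ γ) ∨ ∃ p ∈ sumPairs Δ γ, ⟪p.1, p.2⟫_ℝ < 0
  by_contra! h
  obtain ⟨hcard, hacute⟩ := h
  have : IsAddTorsionFree E := .of_isTorsionFree ℝ E
  have hm_sq : ∀ p ∈ sumPairs Δ γ, m p.1 p.2 ^ 2 = if p.1 = p.2 then 2 else 1 := by
    intro p hp
    have := (hacute p hp).not_gt
    by_cases hpd : p.1 = p.2 <;> simp [hm, hpd, this]
  have hm_sum : ∑ p ∈ sumPairs Δ γ, m p.1 p.2 ^ 2 ≤ 2 :=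
    (sum_congr rfl hm_sq).trans_le (sum_sumPairs_ite_le_two hcard)
  have hS_le : (∑ p ∈ sumPairs Δ γ, m p.1 p.2 * r p.1 * r p.2) ^ 2
      ≤ 2 * ∑ p ∈ sumPairs Δ γ, r p.1 ^ 2 * r p.2 ^ 2 :=
    calc _ ≤ (∑ p ∈ sumPairs Δ γ, m p.1 p.2 ^ 2) * ∑ p ∈ sumPairs Δ γ, (r p.1 * r p.2) ^ 2 := by
          simpa only [mul_assoc] using sum_mul_sq_le_sq_mul_sq (sumPairs Δ γ)
            (fun p => m p.1 p.2) (fun p => r p.1 * r p.2)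
      _ ≤ 2 * ∑ p ∈ sumPairs Δ γ, (r p.1 * r p.2) ^ 2 :=
          mul_le_mul_of_nonneg_right hm_sum (sum_nonneg fun _ _ => sq_nonneg _)
      _ = 2 * ∑ p ∈ sumPairs Δ γ, r p.1 ^ 2 * r p.2 ^ 2 := by simp only [mul_pow]
  linarith

/-- Lemma 4.1 (Lemma sgamma): `S γ > 0` forces `γ` to decompose as a sum of two positive
roots in more than two ways (counting permutations) or as a sum of two positive roots
forming an obtuse angle. -/
theorem stmt4 {E : Type*} [NormedAddCommGroup E] [InnerProductSpace ℝ E]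
    (Δ : Finset E) (r : E → ℝ) (hr : ∀ α ∈ Δ, 0 ≤ r α)
    (m : E → E → ℝ)
    (hm : ∀ α β : E, m α β = if α = β ∨ ⟪α, β⟫_ℝ < 0 then Real.sqrt 2 else 1)
    (γ : E)
    (hS : 0 < (∑ p ∈ (Δ ×ˢ Δ).filter (fun p : E × E => p.1 + p.2 = γ),
          m p.1 p.2 * r p.1 * r p.2) ^ 2
        - 2 * ∑ p ∈ (Δ ×ˢ Δ).filter (fun p : E × E => p.1 + p.2 = γ),
            r p.1 ^ 2 * r p.2 ^ 2) :
    2 < ((Δ ×ˢ Δ).filter (fun p : E × E => p.1 + p.2 = γ)).card ∨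
      ∃ p ∈ (Δ ×ˢ Δ).filter (fun p : E × E => p.1 + p.2 = γ), ⟪p.1, p.2⟫_ℝ < 0 :=
  stmt4_general Δ r m hm γ hS
end

section
/- Let A be an n × n real matrix with nonnegative entries that is strictly upper triangular (A_{ij} = 0 unless i < j) and has Frobenius norm 1, i.e. ∑_{i<j} A_{ij}² = 1. Then 8 · ∑_{i<j<k<ℓ} A_{ik} A_{jℓ} A_{iℓ} A_{jk} + 8 · ∑_{i,j} ((A²)_{ij})² ≤ 10. -/
/-!
By AM–GM, `A i k * A j l * A i l * A j k ≤ (A i k ^ 2 * A j l ^ 2 + A i l ^ 2 * A j k ^ 2) / 2`.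
For fixed `i < j` the two halves run over disjoint sets of ordered pairs `(k, l)`, so the
inner double sum is at most `R i * R j / 2`, where `R i` is the `i`-th row sum of squares;
the same symmetrisation gives `∑_{i<j} R i * R j ≤ (∑ R) ^ 2 / 2 = 1 / 2`.
Cauchy–Schwarz gives `‖A * A‖_F ≤ ‖A‖_F ^ 2 = 1`, and `8 / 4 + 8 = 10`.
-/

open Finset

theorem Matrix.sum_sq_mul_apply_le {l m n : Type*} [Fintype l] [Fintype m] [Fintype n]
    (A : Matrix l m ℝ) (B : Matrix m n ℝ) :
    ∑ i, ∑ j, (A * B) i j ^ 2 ≤ (∑ i, ∑ k, A i k ^ 2) * ∑ k, ∑ j, B k j ^ 2 := by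
  calc ∑ i, ∑ j, (A * B) i j ^ 2
      ≤ ∑ i, ∑ j, (∑ k, A i k ^ 2) * ∑ k, B k j ^ 2 := by
        gcongr with i _ j _
        exact sum_mul_sq_le_sq_mul_sq _ _ _
    _ = (∑ i, ∑ k, A i k ^ 2) * ∑ k, ∑ j, B k j ^ 2 := by
        rw [sum_comm (f := fun k j => B k j ^ 2), sum_mul_sum]

section LinearOrder

variable {ι M : Type*} [Fintype ι] [LinearOrder ι] [LocallyFiniteOrderTop ι]

theorem Finset.sum_sum_Ioi_eq_of_forall_not_lt [AddCommMonoid M] {f : ι → ι → M}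
    (hf : ∀ i j, ¬ i < j → f i j = 0) :
    ∑ i, ∑ j ∈ Ioi i, f i j = ∑ i, ∑ j, f i j := by
  refine sum_congr rfl fun i _ => sum_subset (subset_univ _) fun j _ hj => hf i j ?_
  simpa using hj

theorem Finset.sum_sum_Ioi_add_swap_le [LocallyFiniteOrderBot ι] [AddCommMonoid M]
    [PartialOrder M] [IsOrderedAddMonoid M] {g : ι → ι → M} (hg : ∀ i j, 0 ≤ g i j) :
    ∑ i, ∑ j ∈ Ioi i, (g i j + g j i) ≤ ∑ i, ∑ j, g i j := by
  have hswap : ∑ i, ∑ j ∈ Ioi i, g j i = ∑ i, ∑ j ∈ Iio i, g i j :=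
    sum_comm' fun i j => by simp
  rw [sum_congr rfl fun i _ => sum_add_distrib, sum_add_distrib, hswap, ← sum_add_distrib]
  gcongr with i
  rw [← sum_union (disjoint_Ioi_Iio i)]
  exact sum_le_sum_of_subset_of_nonneg (subset_univ _) fun j _ _ => hg i j

end LinearOrder

section Quadruple

variable {ι : Type*} [Fintype ι] [LinearOrder ι] [LocallyFiniteOrderTop ι]
  [LocallyFiniteOrderBot ι]

theorem Matrix.two_mul_sum_crossing_products_le (A : Matrix ι ι ℝ) (i j : ι) :
    2 * ∑ k ∈ Ioi j, ∑ l ∈ Ioi k, A i k * A j l * A i l * A j k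
      ≤ (∑ k, A i k ^ 2) * ∑ l, A j l ^ 2 := by
  set g : ι → ι → ℝ := fun k l => A i k ^ 2 * A j l ^ 2
  have hg : ∀ k l, 0 ≤ g k l := fun k l => by positivity
  calc 2 * ∑ k ∈ Ioi j, ∑ l ∈ Ioi k, A i k * A j l * A i l * A j k
      = ∑ k ∈ Ioi j, ∑ l ∈ Ioi k, 2 * (A i k * A j l) * (A i l * A j k) := by
        simp only [mul_sum]; ring_nf
    _ ≤ ∑ k ∈ Ioi j, ∑ l ∈ Ioi k, (g k l + g l k) := by
        gcongr with k _ l _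
        convert two_mul_le_add_sq (A i k * A j l) (A i l * A j k) using 1
        ring
    _ ≤ ∑ k, ∑ l ∈ Ioi k, (g k l + g l k) :=
        sum_le_sum_of_subset_of_nonneg (subset_univ _) fun k _ _ =>
          sum_nonneg fun l _ => add_nonneg (hg k l) (hg l k)
    _ ≤ ∑ k, ∑ l, g k l := sum_sum_Ioi_add_swap_le hg
    _ = (∑ k, A i k ^ 2) * ∑ l, A j l ^ 2 := sum_mul_sum _ _ _ _ |>.symm

theorem Matrix.four_mul_sum_crossing_products_le (A : Matrix ι ι ℝ) :
    4 * ∑ i, ∑ j ∈ Ioi i, ∑ k ∈ Ioi j, ∑ l ∈ Ioi k, A i k * A j l * A i l * A j k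
      ≤ (∑ i, ∑ j, A i j ^ 2) ^ 2 := by
  set R : ι → ℝ := fun i => ∑ k, A i k ^ 2
  calc 4 * ∑ i, ∑ j ∈ Ioi i, ∑ k ∈ Ioi j, ∑ l ∈ Ioi k, A i k * A j l * A i l * A j k
      = ∑ i, ∑ j ∈ Ioi i,
          2 * (2 * ∑ k ∈ Ioi j, ∑ l ∈ Ioi k, A i k * A j l * A i l * A j k) := by
        simp only [mul_sum]; ring_nf
    _ ≤ ∑ i, ∑ j ∈ Ioi i, (R i * R j + R j * R i) := by
        gcongr with i _ j _
        linarith [Matrix.two_mul_sum_crossing_products_le A i j]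
    _ ≤ ∑ i, ∑ j, R i * R j :=
        sum_sum_Ioi_add_swap_le fun i j => mul_nonneg (sum_nonneg fun _ _ => sq_nonneg _)
          (sum_nonneg fun _ _ => sq_nonneg _)
    _ = (∑ i, ∑ j, A i j ^ 2) ^ 2 := by rw [← sum_mul_sum, sq]

end Quadruple

theorem stmt6_general {n : ℕ} (A : Matrix (Fin n) (Fin n) ℝ)
    (hupper : ∀ i j : Fin n, ¬ i < j → A i j = 0)
    (hnorm : ∑ i : Fin n, ∑ j ∈ Ioi i, A i j ^ 2 = 1) :
    8 * ∑ i : Fin n, ∑ j ∈ Ioi i, ∑ k ∈ Ioi j, ∑ l ∈ Ioi k,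
        A i k * A j l * A i l * A j k
      + 8 * ∑ i : Fin n, ∑ j : Fin n, ((A * A) i j) ^ 2
      ≤ 10 := by
  have hfrob : ∑ i, ∑ j, A i j ^ 2 = 1 := by
    rw [← hnorm, sum_sum_Ioi_eq_of_forall_not_lt fun i j hij => by simp [hupper i j hij]]
  have hquad := Matrix.four_mul_sum_crossing_products_le A
  have hsq := Matrix.sum_sq_mul_apply_le A A
  rw [hfrob] at hquad hsq
  linarith

/-- The combined estimate of the `A_n` case in Section 5:
`∑_{γ∈Φ₁} S_γ + ∑_{γ∈Φ₂} S_γ ≤ 2 + 8 = 10` for a strictly upper triangular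
nonnegative matrix `A` of Frobenius norm one. -/
theorem stmt6 {n : ℕ} (A : Matrix (Fin n) (Fin n) ℝ)
    (hA : ∀ i j, 0 ≤ A i j)
    (hupper : ∀ i j : Fin n, ¬ i < j → A i j = 0)
    (hnorm : ∑ i : Fin n, ∑ j ∈ Ioi i, A i j ^ 2 = 1) :
    8 * ∑ i : Fin n, ∑ j ∈ Ioi i, ∑ k ∈ Ioi j, ∑ l ∈ Ioi k,
        A i k * A j l * A i l * A j k
      + 8 * ∑ i : Fin n, ∑ j : Fin n, ((A * A) i j) ^ 2
      ≤ 10 :=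
  stmt6_general A hupper hnorm
end

section
/- Let B be an n × n real matrix with nonnegative entries, B_{ij} ≥ 0. Then 8 · ∑_{i<j<k<ℓ} ( B_{ij} B_{kℓ} B_{ik} B_{jℓ} + B_{ij} B_{kℓ} B_{iℓ} B_{jk} + B_{ik} B_{jℓ} B_{iℓ} B_{jk} ) ≤ 18 · ( ∑_{i,j} B_{ij}² )². -/
open Finset

/-! With `x = B²` entrywise, AM-GM `uv + uw + vw ≤ u² + v² + w²` bounds each summand by
`x i j * x k l + x i k * x j l + x i l * x j k`. Dropping the constraints `j < k < l` on the
last two indices and writing `r i = ∑ j, x i j`, `S = ∑ r`, the sum is at most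
`∑_{i<j} (x i j * S + 2 r i r j) ≤ S² + S²`, so the left side is at most `16 S² ≤ 18 S²`. -/

lemma sum_Ioi_Ioi_Ioi_le_sum_Ioi_sum_sum {α : Type*} [Fintype α] [LinearOrder α]
    [LocallyFiniteOrderTop α] {T : α → α → α → α → ℝ} (hT : ∀ i j k l, 0 ≤ T i j k l) :
    ∑ i, ∑ j ∈ Ioi i, ∑ k ∈ Ioi j, ∑ l ∈ Ioi k, T i j k l
      ≤ ∑ i, ∑ j ∈ Ioi i, ∑ k, ∑ l, T i j k l := by
  refine sum_le_sum fun i _ => sum_le_sum fun j _ => ?_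
  calc ∑ k ∈ Ioi j, ∑ l ∈ Ioi k, T i j k l ≤ ∑ k ∈ Ioi j, ∑ l, T i j k l :=
        sum_le_sum fun k _ => sum_le_univ_sum_of_nonneg fun l => hT i j k l
    _ ≤ ∑ k, ∑ l, T i j k l :=
        sum_le_univ_sum_of_nonneg fun k => sum_nonneg fun l _ => hT i j k l

lemma two_mul_sum_Ioi_mul_le_sq_sum {α : Type*} [Fintype α] [LinearOrder α]
    [LocallyFiniteOrderTop α] [LocallyFiniteOrderBot α] {r : α → ℝ} (hr : ∀ i, 0 ≤ r i) :
    2 * ∑ i, ∑ j ∈ Ioi i, r i * r j ≤ (∑ i, r i) ^ 2 := by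
  calc 2 * ∑ i, ∑ j ∈ Ioi i, r i * r j = ∑ i, ∑ j ∈ {i}ᶜ, r j * r i := by
        simp only [← sum_sum_Ioi_add_eq_sum_sum_off_diag fun i j => r i * r j, mul_sum]
        exact sum_congr rfl fun i _ => sum_congr rfl fun j _ => by ring
    _ ≤ ∑ i, ∑ j, r j * r i :=
        sum_le_sum fun i _ => sum_le_univ_sum_of_nonneg fun j => mul_nonneg (hr j) (hr i)
    _ = (∑ i, r i) ^ 2 := by rw [sq, sum_mul_sum, sum_comm]

lemma sum_sum_pairings_eq {α : Type*} [Fintype α] (x : α → α → ℝ) (i j : α) :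
    ∑ k, ∑ l, (x i j * x k l + x i k * x j l + x i l * x j k)
      = x i j * ∑ k, ∑ l, x k l + 2 * ((∑ l, x i l) * ∑ l, x j l) := by
  simp only [sum_add_distrib, ← mul_sum, ← sum_mul]
  ring

lemma sum_Ioi_Ioi_Ioi_pairings_le {α : Type*} [Fintype α] [LinearOrder α]
    [LocallyFiniteOrderTop α] [LocallyFiniteOrderBot α] {x : α → α → ℝ}
    (hx : ∀ i j, 0 ≤ x i j) :
    ∑ i, ∑ j ∈ Ioi i, ∑ k ∈ Ioi j, ∑ l ∈ Ioi k,
        (x i j * x k l + x i k * x j l + x i l * x j k)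
      ≤ 2 * (∑ i, ∑ j, x i j) ^ 2 := by
  set S := ∑ i, ∑ j, x i j
  set r : α → ℝ := fun i => ∑ j, x i j
  have hr : ∀ i, 0 ≤ r i := fun i => sum_nonneg fun j _ => hx i j
  have hS : 0 ≤ S := sum_nonneg fun i _ => hr i
  have hupper : ∑ i, ∑ j ∈ Ioi i, x i j ≤ S :=
    sum_le_sum fun i _ => sum_le_univ_sum_of_nonneg fun j => hx i j
  calc _ ≤ ∑ i, ∑ j ∈ Ioi i, ∑ k, ∑ l, (x i j * x k l + x i k * x j l + x i l * x j k) :=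
        sum_Ioi_Ioi_Ioi_le_sum_Ioi_sum_sum fun i j k l =>
          add_nonneg (add_nonneg (mul_nonneg (hx i j) (hx k l)) (mul_nonneg (hx i k) (hx j l)))
            (mul_nonneg (hx i l) (hx j k))
    _ = (∑ i, ∑ j ∈ Ioi i, x i j) * S + 2 * ∑ i, ∑ j ∈ Ioi i, r i * r j := by
        rw [sum_congr rfl fun i _ => sum_congr rfl fun j _ => sum_sum_pairings_eq x i j]
        simp only [sum_add_distrib, ← sum_mul, ← mul_sum]
        rfl
    _ ≤ S * S + S ^ 2 :=
        add_le_add (mul_le_mul_of_nonneg_right hupper hS) (two_mul_sum_Ioi_mul_le_sq_sum hr)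
    _ = 2 * S ^ 2 := by ring

lemma mul_add_mul_add_mul_le_sq_add_sq_add_sq (a b c d e f : ℝ) :
    a * b * c * d + a * b * e * f + c * d * e * f
      ≤ a ^ 2 * b ^ 2 + c ^ 2 * d ^ 2 + e ^ 2 * f ^ 2 := by
  nlinarith [sq_nonneg (a * b - c * d), sq_nonneg (a * b - e * f), sq_nonneg (c * d - e * f)]

theorem stmt7_general {n : ℕ} (B : Matrix (Fin n) (Fin n) ℝ) :
    8 * ∑ i : Fin n, ∑ j ∈ Ioi i, ∑ k ∈ Ioi j, ∑ l ∈ Ioi k,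
        (B i j * B k l * B i k * B j l
          + B i j * B k l * B i l * B j k
          + B i k * B j l * B i l * B j k)
      ≤ 18 * (∑ i : Fin n, ∑ j : Fin n, B i j ^ 2) ^ 2 := by
  have hpairings := sum_Ioi_Ioi_Ioi_pairings_le (x := fun i j => B i j ^ 2)
    fun i j => sq_nonneg (B i j)
  calc _ ≤ 8 * ∑ i : Fin n, ∑ j ∈ Ioi i, ∑ k ∈ Ioi j, ∑ l ∈ Ioi k,
        (B i j ^ 2 * B k l ^ 2 + B i k ^ 2 * B j l ^ 2 + B i l ^ 2 * B j k ^ 2) := by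
        gcongr 8 * ∑ i, ∑ j ∈ _, ∑ k ∈ _, ∑ l ∈ _, ?_
        apply mul_add_mul_add_mul_le_sq_add_sq_add_sq
    _ ≤ 18 * (∑ i : Fin n, ∑ j : Fin n, B i j ^ 2) ^ 2 := by
        linarith [sq_nonneg (∑ i : Fin n, ∑ j : Fin n, B i j ^ 2)]

/-- The estimate `∑_{γ∈Φ₃} S_γ ≤ 18‖B‖⁴` in the `D_n` case of Section 5. -/
theorem stmt7 {n : ℕ} (B : Matrix (Fin n) (Fin n) ℝ) (hB : ∀ i j, 0 ≤ B i j) :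
    8 * ∑ i : Fin n, ∑ j ∈ Ioi i, ∑ k ∈ Ioi j, ∑ l ∈ Ioi k,
        (B i j * B k l * B i k * B j l
          + B i j * B k l * B i l * B j k
          + B i k * B j l * B i l * B j k)
      ≤ 18 * (∑ i : Fin n, ∑ j : Fin n, B i j ^ 2) ^ 2 :=
  stmt7_general B
end

section
/- For all real numbers X, Y, Z ≥ 0 with X² + Y² + Z² = 1, one has 10X⁴ + 56X²Y² + 18Y⁴ + Z²·(12X² + 16XY + 16Y²) + 2Z⁴ ≤ 22 − 20Z², and in particular this quantity is at most 22. -/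
/-! The quartic and the quadratic part are dominated by `22 (X² + Y²)²` and `24 (X² + Y²)`,
the differences being sums of squares. Substituting `X² + Y² = 1 - Z²` bounds the left-hand side
by `22 (1 - Z²)² + 24 Z² (1 - Z²) + 2 Z⁴`, which is identically `22 - 20 Z²`. -/

lemma quartic_le_twentytwo_mul_sq_add_sq (X Y : ℝ) :
    10 * X ^ 4 + 56 * X ^ 2 * Y ^ 2 + 18 * Y ^ 4 ≤ 22 * (X ^ 2 + Y ^ 2) ^ 2 := by
  have hdiff : 22 * (X ^ 2 + Y ^ 2) ^ 2 - (10 * X ^ 4 + 56 * X ^ 2 * Y ^ 2 + 18 * Y ^ 4)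
      = 3 * (2 * X ^ 2 - Y ^ 2) ^ 2 + (Y ^ 2) ^ 2 := by ring
  rw [← sub_nonneg, hdiff]
  positivity

lemma quadratic_le_twentyfour_mul_sq_add_sq (X Y : ℝ) :
    12 * X ^ 2 + 16 * X * Y + 16 * Y ^ 2 ≤ 24 * (X ^ 2 + Y ^ 2) := by
  have hdiff : 24 * (X ^ 2 + Y ^ 2) - (12 * X ^ 2 + 16 * X * Y + 16 * Y ^ 2)
      = 8 * (X - Y) ^ 2 + 4 * X ^ 2 := by ring
  rw [← sub_nonneg, hdiff]
  positivity

theorem stmt11_general (X Y Z : ℝ)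
    (h : X ^ 2 + Y ^ 2 + Z ^ 2 = 1) :
    10 * X ^ 4 + 56 * X ^ 2 * Y ^ 2 + 18 * Y ^ 4
        + Z ^ 2 * (12 * X ^ 2 + 16 * X * Y + 16 * Y ^ 2) + 2 * Z ^ 4
      ≤ 22 - 20 * Z ^ 2 ∧
    10 * X ^ 4 + 56 * X ^ 2 * Y ^ 2 + 18 * Y ^ 4
        + Z ^ 2 * (12 * X ^ 2 + 16 * X * Y + 16 * Y ^ 2) + 2 * Z ^ 4
      ≤ 22 := by
  have hXY : X ^ 2 + Y ^ 2 = 1 - Z ^ 2 := by linarith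
  have hbound : 10 * X ^ 4 + 56 * X ^ 2 * Y ^ 2 + 18 * Y ^ 4
        + Z ^ 2 * (12 * X ^ 2 + 16 * X * Y + 16 * Y ^ 2) + 2 * Z ^ 4
      ≤ 22 - 20 * Z ^ 2 :=
    calc _ ≤ 22 * (X ^ 2 + Y ^ 2) ^ 2 + Z ^ 2 * (24 * (X ^ 2 + Y ^ 2)) + 2 * Z ^ 4 := by
          gcongr
          · exact quartic_le_twentytwo_mul_sq_add_sq X Y
          · exact quadratic_le_twentyfour_mul_sq_add_sq X Y
      _ = 22 - 20 * Z ^ 2 := by rw [hXY]; ring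
  exact ⟨hbound, hbound.trans (by linarith [sq_nonneg Z])⟩

/-- The final estimate of the `B_n` case in Section 5. -/
theorem stmt11 (X Y Z : ℝ) (hX : 0 ≤ X) (hY : 0 ≤ Y) (hZ : 0 ≤ Z)
    (h : X ^ 2 + Y ^ 2 + Z ^ 2 = 1) :
    10 * X ^ 4 + 56 * X ^ 2 * Y ^ 2 + 18 * Y ^ 4
        + Z ^ 2 * (12 * X ^ 2 + 16 * X * Y + 16 * Y ^ 2) + 2 * Z ^ 4
      ≤ 22 - 20 * Z ^ 2 ∧
    10 * X ^ 4 + 56 * X ^ 2 * Y ^ 2 + 18 * Y ^ 4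
        + Z ^ 2 * (12 * X ^ 2 + 16 * X * Y + 16 * Y ^ 2) + 2 * Z ^ 4
      ≤ 22 :=
  stmt11_general X Y Z h
end

section
/- Let Δ⁺ ⊂ ℝ² be the set of six vectors {(1,0), (−1/2, √3/2), (1/2, √3/2), (3/2, √3/2), (−3/2, √3/2), (0, √3)} (the positive roots of the root system G₂). For α, β ∈ Δ⁺ set m(α,β)² = 2 if α = β or ⟪α,β⟫ < 0, and m(α,β)² = 1 otherwise. Then the maximum, over all γ ∈ ℝ² expressible as γ = α + β with α, β ∈ Δ⁺, of ∑_{(α,β) ∈ Δ⁺×Δ⁺, α+β=γ} m(α,β)², equals 6. -/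
/-!
In the coordinates `(a, b) ↦ (a / 2, b √3 / 2)` the roots of `G₂` become the integer points
`(2,0), (-1,1), (1,1), (3,1), (-3,1), (0,2)`, the inner product becomes `(a a' + 3 b b') / 4`,
and sums of roots correspond to sums of integer points. The whole computation thus moves,
injectively and additively, to `ℤ × ℤ`, where it is decided by evaluation.
-/

open Finset

section PairWeightSum

variable {M N R : Type*} [AddCommMonoid M] [AddCommMonoid N] [AddCommMonoid R]
  [DecidableEq M] [DecidableEq N]

def pairWeightSum (S : Finset M) (w : M → M → R) (c : M) : R :=
  ∑ p ∈ (S ×ˢ S).filter (fun p : M × M => p.1 + p.2 = c), w p.1 p.2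

theorem pairWeightSum_image {f : M →+ N} (hf : Function.Injective f) (S : Finset M)
    (w : N → N → R) (c : M) :
    pairWeightSum (S.image f) w (f c) = pairWeightSum S (fun a b => w (f a) (f b)) c := by
  have hfilter : ∀ q : M × M, f q.1 + f q.2 = f c ↔ q.1 + q.2 = c := fun q => by
    rw [← map_add, hf.eq_iff]
  rw [pairWeightSum, pairWeightSum, ← prodMap_image_product, filter_image,
    sum_image fun _ _ _ _ h => (hf.prodMap hf) h]
  exact sum_congr (filter_congr fun q _ => hfilter q) fun _ _ => rfl

end PairWeightSum

noncomputable def g2Coords : ℤ × ℤ →+ ℝ × ℝ :=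
  AddMonoidHom.mk' (fun p => ((p.1 : ℝ) / 2, (p.2 : ℝ) * Real.sqrt 3 / 2)) fun p q => by
    ext <;> simp only [Prod.fst_add, Prod.snd_add, Int.cast_add] <;> ring

theorem g2Coords_apply (p : ℤ × ℤ) :
    g2Coords p = ((p.1 : ℝ) / 2, (p.2 : ℝ) * Real.sqrt 3 / 2) := rfl

theorem g2Coords_injective : Function.Injective g2Coords := by
  intro p q h
  have hs : Real.sqrt 3 ≠ 0 := by positivity
  simp only [g2Coords_apply, Prod.mk.injEq] at h
  obtain ⟨h1, h2⟩ := h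
  have e2 : (p.2 : ℝ) = q.2 := mul_right_cancel₀ hs (by linarith)
  exact Prod.ext (by exact_mod_cast (by linarith : (p.1 : ℝ) = q.1)) (by exact_mod_cast e2)

theorem g2Coords_inner (p q : ℤ × ℤ) :
    (g2Coords p).1 * (g2Coords q).1 + (g2Coords p).2 * (g2Coords q).2
      = ((p.1 * q.1 + 3 * p.2 * q.2 : ℤ) : ℝ) / 4 := by
  have hs3 : Real.sqrt 3 * Real.sqrt 3 = 3 := Real.mul_self_sqrt (by norm_num)
  simp only [g2Coords_apply]
  push_cast
  linear_combination ((p.2 : ℝ) * q.2 / 4) * hs3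

def g2PosRootCoords : Finset (ℤ × ℤ) := {(2, 0), (-1, 1), (1, 1), (3, 1), (-3, 1), (0, 2)}

theorem image_g2PosRootCoords :
    g2PosRootCoords.image g2Coords = {((1 : ℝ), (0 : ℝ)), (-1/2, Real.sqrt 3 / 2),
      (1/2, Real.sqrt 3 / 2), (3/2, Real.sqrt 3 / 2), (-3/2, Real.sqrt 3 / 2), (0, Real.sqrt 3)} := by
  simp only [g2PosRootCoords, image_insert, image_singleton, g2Coords_apply]
  norm_num

def g2WeightInt (p q : ℤ × ℤ) : ℤ :=
  if p = q ∨ p.1 * q.1 + 3 * p.2 * q.2 < 0 then 2 else 1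

theorem g2WeightInt_eq (p q : ℤ × ℤ) :
    (if g2Coords p = g2Coords q ∨
        (g2Coords p).1 * (g2Coords q).1 + (g2Coords p).2 * (g2Coords q).2 < 0 then 2 else 1 : ℝ)
      = g2WeightInt p q := by
  have hneg : ((p.1 * q.1 + 3 * p.2 * q.2 : ℤ) : ℝ) / 4 < 0 ↔ p.1 * q.1 + 3 * p.2 * q.2 < 0 := by
    rw [div_lt_iff₀ four_pos, zero_mul, Int.cast_lt_zero]
  simp only [g2Coords_inner, g2Coords_injective.eq_iff, hneg, g2WeightInt]
  split_ifs <;> norm_num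

theorem pairWeightSum_g2WeightInt_le :
    ∀ a ∈ g2PosRootCoords, ∀ b ∈ g2PosRootCoords,
      pairWeightSum g2PosRootCoords g2WeightInt (a + b) ≤ 6 := by
  decide

theorem pairWeightSum_g2WeightInt_zero_two :
    pairWeightSum g2PosRootCoords g2WeightInt (0, 2) = 6 := by
  decide

open scoped Classical

/-- The computation `C_Δ = 6` for the root system of type `G₂` (Subsection 3.1 and the
Appendix of the paper): the maximum over all sums `γ = α + β` of two positive roots of
`∑_{(α,β) : α+β=γ} m(α,β)²` equals `6`. Here `msq α β = m(α,β)²` is `2` if `α = β` or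
`⟪α,β⟫ < 0` and `1` otherwise, and pairs are ordered. -/
theorem stmt16 (msq : (ℝ × ℝ) → (ℝ × ℝ) → ℝ)
    (hm : ∀ α β : ℝ × ℝ,
      msq α β = if α = β ∨ α.1 * β.1 + α.2 * β.2 < 0 then 2 else 1)
    (Δ : Finset (ℝ × ℝ))
    (hΔ : Δ = {((1 : ℝ), (0 : ℝ)), (-1/2, Real.sqrt 3 / 2), (1/2, Real.sqrt 3 / 2),
      (3/2, Real.sqrt 3 / 2), (-3/2, Real.sqrt 3 / 2), (0, Real.sqrt 3)}) :
    IsGreatest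
      {x : ℝ | ∃ γ : ℝ × ℝ, (∃ α ∈ Δ, ∃ β ∈ Δ, α + β = γ) ∧
        x = ∑ p ∈ (Δ ×ˢ Δ).filter (fun p : (ℝ × ℝ) × (ℝ × ℝ) => p.1 + p.2 = γ),
              msq p.1 p.2}
      6 := by
  rw [← image_g2PosRootCoords] at hΔ
  subst hΔ
  have hsum : ∀ c, pairWeightSum (g2PosRootCoords.image g2Coords) msq (g2Coords c)
      = ((pairWeightSum g2PosRootCoords g2WeightInt c : ℤ) : ℝ) := fun c => by
    rw [pairWeightSum_image g2Coords_injective, pairWeightSum, pairWeightSum, Int.cast_sum]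
    simp only [hm, g2WeightInt_eq]
  refine ⟨⟨g2Coords (0, 2), ⟨g2Coords (-1, 1), mem_image_of_mem _ (by decide),
    g2Coords (1, 1), mem_image_of_mem _ (by decide), by rw [← map_add]; rfl⟩, ?_⟩, ?_⟩
  · rw [← pairWeightSum, hsum, pairWeightSum_g2WeightInt_zero_two]; norm_num
  · rintro x ⟨γ, ⟨α, hα, β, hβ, rfl⟩, rfl⟩
    obtain ⟨a, ha, rfl⟩ := mem_image.1 hα
    obtain ⟨b, hb, rfl⟩ := mem_image.1 hβ
    rw [← pairWeightSum, ← map_add, hsum]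
    exact_mod_cast pairWeightSum_g2WeightInt_le a ha b hb
end
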